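/- The clique potential of the P^n Potts model is submodular: let C be a nonempty finite set and μ ≤ 0 a real number. Then the function g : Finset C → ℝ defined by g(S) = μ if S = C and g(S) = 0 otherwise, is submodular on the subsets of C. In particular, for the P^n Potts model with label costs λ_ℓ ≤ λ_max, each per-label function g_ℓ(S) = (λ_ℓ − λ_max)·[S = C] is submodular. -/
import Mathlib

/-- A function `f` on the subsets of a finite set `C` is submodular if
`f (S ∩ T) + f (S ∪ T) ≤ f S + f T` for all `S, T ⊆ C`. -/
def Submodular {C : Type*} [DecidableEq C] (f : Finset C → ℝ) : Prop :=
  ∀ S T : Finset C, f (S ∩ T) + f (S ∪ T) ≤ f S + f T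

lemma potts_aux {C : Type*} [Fintype C] [DecidableEq C] (μ : ℝ) (hμ : μ ≤ 0) :
    Submodular (fun S : Finset C => if S = Finset.univ then μ else 0) := by
  intro S T
  simp only
  by_cases hS : S = Finset.univ <;> by_cases hT : T = Finset.univ
  · simp [hS, hT]
  · simp [hS, hT]
  · simp [hS, hT]
  · have hint : S ∩ T ≠ Finset.univ := by
      intro h
      exact hS (Finset.univ_subset_iff.mp (h ▸ Finset.inter_subset_left))
    simp only [hS, hT, hint, if_neg, if_false]
    split <;> linarith

/-- The clique potential of the `Pⁿ` Potts model is submodular: on a nonempty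
finite set `C`, the function paying `μ ≤ 0` if `S = C` and `0` otherwise is
submodular. In particular, each per-label function
`g_ℓ(S) = (λ_ℓ − λ_max)·[S = C]` with `λ_ℓ ≤ λ_max` is submodular. -/
theorem potts_clique_submodular {C : Type*} [Fintype C] [DecidableEq C] [Nonempty C]
    (μ : ℝ) (hμ : μ ≤ 0) :
    Submodular (fun S : Finset C => if S = Finset.univ then μ else 0) ∧
    ∀ {L : Type*} (lam : L → ℝ) (lamMax : ℝ), (∀ ℓ : L, lam ℓ ≤ lamMax) →
      ∀ ℓ : L, Submodular
        (fun S : Finset C => if S = Finset.univ then lam ℓ - lamMax else 0) := by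
  refine ⟨potts_aux μ hμ, ?_⟩
  intro L lam lamMax hle ℓ
  exact potts_aux _ (by linarith [hle ℓ])
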